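/- arXiv:1606.01316 — 3 statements merged into one kernel-verified Lean document; each statement's English description precedes it below -/
import Mathlib

section
/- Let λ > 0, U ∈ ℝ^{n×r} with ‖U‖_F ≤ λ, let f : ℝ^{n×n} → ℝ be differentiable, X = UUᵀ, and let the step size η̂ > 0 satisfy η̂ ≤ 1/(128‖∇f(X)·Q_U Q_Uᵀ‖₂). Then the gradient iterate Ũ = U − η̂·∇f(X)·U satisfies ‖Ũ‖_F ≤ (1 + 1/128)·λ = (129/128)·λ. Consequently, the projection of Ũ onto the Frobenius ball C = {V ∈ ℝ^{n×r} : ‖V‖_F ≤ λ}, given by the scaling Π_C(Ũ) = ξ·Ũ with ξ = min{1, λ/‖Ũ‖_F}, satisfies 128/129 ≤ ξ ≤ 1. -/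
open Matrix

attribute [local instance] Matrix.frobeniusNormedAddCommGroup Matrix.frobeniusNormedSpace

noncomputable section

/-- Frobenius inner product of two real matrices: `⟨A,B⟩ = tr(Aᵀ B)`. -/
def finner {n m : ℕ} (A B : Matrix (Fin n) (Fin m) ℝ) : ℝ := Matrix.trace (Aᵀ * B)

/-- Frobenius norm. -/
def fnorm {n m : ℕ} (A : Matrix (Fin n) (Fin m) ℝ) : ℝ := Real.sqrt (finner A A)

/-- Spectral norm: the operator norm of the induced map between Euclidean spaces. -/
def specNorm {n m : ℕ} (A : Matrix (Fin n) (Fin m) ℝ) : ℝ :=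
  ‖LinearMap.toContinuousLinearMap (Matrix.toEuclideanLin A)‖

/-- `singVal A k` is the `k`-th largest singular value of `A` (`k = 1, …`), via the
Courant–Fischer min-max characterization. -/
def singVal {n m : ℕ} (A : Matrix (Fin n) (Fin m) ℝ) (k : ℕ) : ℝ :=
  ⨆ V : {V : Submodule ℝ (EuclideanSpace ℝ (Fin m)) // Module.finrank ℝ V = k},
    ⨅ x : {x : EuclideanSpace ℝ (Fin m) // x ∈ V.1 ∧ ‖x‖ = 1},
      ‖Matrix.toEuclideanLin A x.1‖

/-- `DIST U V = min_R ‖U - V R‖_F` over `r × r` orthogonal matrices `R`. -/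
def DIST {n r : ℕ} (U V : Matrix (Fin n) (Fin r) ℝ) : ℝ :=
  ⨅ R : Matrix.orthogonalGroup (Fin r) ℝ, fnorm (U - V * (R : Matrix (Fin r) (Fin r) ℝ))

/-- `g` is the gradient of `f` w.r.t. the Frobenius inner product. -/
def IsGradient {n : ℕ} (f : Matrix (Fin n) (Fin n) ℝ → ℝ)
    (g : Matrix (Fin n) (Fin n) ℝ → Matrix (Fin n) (Fin n) ℝ) : Prop :=
  ∀ X, DifferentiableAt ℝ f X ∧ ∀ V, fderiv ℝ f X V = finner (g X) V

/-- `P` is the orthogonal projection matrix onto the column space of `U`: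
the symmetric idempotent matrix with range equal to the column space of `U`. -/
def IsProjMatrix {n r : ℕ} (P : Matrix (Fin n) (Fin n) ℝ)
    (U : Matrix (Fin n) (Fin r) ℝ) : Prop :=
  Pᵀ = P ∧ P * P = P ∧ LinearMap.range P.mulVecLin = LinearMap.range U.mulVecLin

/-- `P` is the Euclidean (Frobenius) projection of `V` onto `C`. -/
def IsFrobProjection {n r : ℕ} (C : Set (Matrix (Fin n) (Fin r) ℝ))
    (V P : Matrix (Fin n) (Fin r) ℝ) : Prop :=
  P ∈ C ∧ ∀ W ∈ C, fnorm (P - V) ≤ fnorm (W - V)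

/-!
Since `P` fixes the columns of `U`, `∇f(X) U = (∇f(X) P) U`, so
`‖η ∇f(X) U‖_F ≤ η ‖∇f(X) P‖₂ ‖U‖_F ≤ ‖U‖_F / 128`, and the triangle inequality bounds `‖Ũ‖_F`
above by `(129/128) λ` and below by `(127/128) ‖U‖_F`. A positive step size forces
`∇f(X) P ≠ 0`, hence `U ≠ 0` and `Ũ ≠ 0`, so `λ / ‖Ũ‖_F` is not the junk value `λ / 0 = 0`.
-/

theorem fnorm_eq_norm {n m : ℕ} (A : Matrix (Fin n) (Fin m) ℝ) : fnorm A = ‖A‖ := by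
  rw [Matrix.frobenius_norm_def, fnorm, finner, Matrix.trace, Real.sqrt_eq_rpow, Finset.sum_comm]
  simp [Matrix.mul_apply, sq]

theorem PiLp.norm_le_mul_norm_of_forall {ι : Type*} [Fintype ι] {β γ : ι → Type*}
    [∀ i, SeminormedAddCommGroup (β i)] [∀ i, SeminormedAddCommGroup (γ i)]
    {x : PiLp 2 β} {y : PiLp 2 γ} {c : ℝ} (hc : 0 ≤ c) (h : ∀ i, ‖x i‖ ≤ c * ‖y i‖) :
    ‖x‖ ≤ c * ‖y‖ := by
  refine (pow_le_pow_iff_left₀ (norm_nonneg _) (by positivity) two_ne_zero).mp ?_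
  rw [mul_pow, PiLp.norm_sq_eq_of_L2, PiLp.norm_sq_eq_of_L2, Finset.mul_sum]
  simp_rw [← mul_pow]
  exact Finset.sum_le_sum fun i _ ↦ pow_le_pow_left₀ (norm_nonneg _) (h i) 2

theorem Matrix.frobenius_norm_mul_le_opNorm_mul {𝕜 l m n : Type*} [RCLike 𝕜] [Fintype l]
    [Fintype m] [Fintype n] [DecidableEq m] (A : Matrix l m 𝕜) (B : Matrix m n 𝕜) :
    ‖A * B‖ ≤ ‖(toEuclideanLin A).toContinuousLinearMap‖ * ‖B‖ := by
  rw [← frobenius_norm_transpose, ← frobenius_norm_transpose B]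
  refine PiLp.norm_le_mul_norm_of_forall (x := WithLp.toLp 2 fun j ↦ WithLp.toLp 2 ((A * B)ᵀ j))
    (y := WithLp.toLp 2 fun j ↦ WithLp.toLp 2 (Bᵀ j)) (norm_nonneg _) fun j ↦ ?_
  have hcol : (A * B)ᵀ j = A *ᵥ Bᵀ j := by
    ext i; simp [Matrix.mul_apply, Matrix.mulVec, dotProduct]
  simpa [hcol] using (toEuclideanLin A).toContinuousLinearMap.le_opNorm (WithLp.toLp 2 (Bᵀ j))

theorem IsProjMatrix.mul_eq_right {n r : ℕ} {P : Matrix (Fin n) (Fin n) ℝ}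
    {U : Matrix (Fin n) (Fin r) ℝ} (hP : IsProjMatrix P U) : P * U = U := by
  obtain ⟨-, hidem, hrange⟩ := hP
  have hidemLin : IsIdempotentElem P.mulVecLin := by
    rw [IsIdempotentElem, Module.End.mul_eq_comp, ← Matrix.mulVecLin_mul, hidem]
  refine Matrix.ext_iff_mulVec.mpr fun v ↦ ?_
  rw [← Matrix.mulVec_mulVec]
  exact LinearMap.IsIdempotentElem.mem_range_iff hidemLin |>.mp
    (hrange ▸ LinearMap.mem_range_self U.mulVecLin v)

theorem IsProjMatrix.eq_zero {n r : ℕ} {P : Matrix (Fin n) (Fin n) ℝ}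
    (hP : IsProjMatrix P (0 : Matrix (Fin n) (Fin r) ℝ)) : P = 0 := by
  have hrange := hP.2.2
  rw [Matrix.mulVecLin_zero, LinearMap.range_zero, LinearMap.range_eq_bot] at hrange
  exact Matrix.ext_iff_mulVec.mpr fun v ↦ by simpa using LinearMap.congr_fun hrange v

theorem inv_le_min_one_div_of_le_mul {a b c : ℝ} (ha : 0 < a) (hc : 1 ≤ c) (h : a ≤ c * b) :
    c⁻¹ ≤ min 1 (b / a) :=
  le_min (inv_le_one_of_one_le₀ hc) <| by
    rw [le_div_iff₀ ha, inv_mul_le_iff₀ (by linarith)]; exact h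

theorem gradient_step_stays_near_ball_general {n r : ℕ} (lam : ℝ)
    (g : Matrix (Fin n) (Fin n) ℝ → Matrix (Fin n) (Fin n) ℝ)
    (U : Matrix (Fin n) (Fin r) ℝ) (hU : fnorm U ≤ lam)
    (P : Matrix (Fin n) (Fin n) ℝ) (hP : IsProjMatrix P U)
    (X : Matrix (Fin n) (Fin n) ℝ)
    (η : ℝ) (hη : 0 < η) (hηle : η ≤ 1 / (128 * specNorm (g X * P)))
    (Utld : Matrix (Fin n) (Fin r) ℝ) (hUtld : Utld = U - η • (g X * U))
    (ξ : ℝ) (hξ : ξ = min 1 (lam / fnorm Utld)) :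
    fnorm Utld ≤ 129 / 128 * lam ∧ 128 / 129 ≤ ξ ∧ ξ ≤ 1 := by
  rw [fnorm_eq_norm] at hU hξ ⊢
  have hs : 0 < 128 * specNorm (g X * P) := one_div_pos.mp (hη.trans_le hηle)
  have hηs : η * specNorm (g X * P) ≤ 1 / 128 := by
    have := (le_div_iff₀ hs).mp hηle
    linarith
  have hstep : ‖η • (g X * U)‖ ≤ ‖U‖ / 128 :=
    calc ‖η • (g X * U)‖ = η * ‖g X * P * U‖ := by
          rw [norm_smul, Real.norm_of_nonneg hη.le, Matrix.mul_assoc, hP.mul_eq_right]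
      _ ≤ η * (specNorm (g X * P) * ‖U‖) :=
          mul_le_mul_of_nonneg_left (frobenius_norm_mul_le_opNorm_mul _ _) hη.le
      _ ≤ ‖U‖ / 128 := by nlinarith [norm_nonneg U]
  have hU0 : U ≠ 0 := by
    rintro rfl
    simp [hP.eq_zero, specNorm] at hs
  have hupper : ‖Utld‖ ≤ 129 / 128 * lam :=
    calc ‖Utld‖ ≤ ‖U‖ + ‖η • (g X * U)‖ := hUtld ▸ norm_sub_le _ _
      _ ≤ 129 / 128 * lam := by linarith
  have hpos : 0 < ‖Utld‖ :=
    calc 0 < ‖U‖ - ‖η • (g X * U)‖ := by linarith [norm_pos_iff.mpr hU0]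
      _ ≤ ‖Utld‖ := hUtld ▸ norm_sub_norm_le _ _
  refine ⟨hupper, ?_, hξ ▸ min_le_left _ _⟩
  rw [hξ]
  convert inv_le_min_one_div_of_le_mul hpos (by norm_num) hupper using 1
  norm_num

/-- If `‖U‖_F ≤ λ`, `X = UUᵀ`, and the step size satisfies
`0 < η̂ ≤ 1/(128·‖∇f(X)·Q_U Q_Uᵀ‖₂)`, then `Ũ = U − η̂·∇f(X)·U` satisfies
`‖Ũ‖_F ≤ (129/128)·λ`, and hence the scaling factor
`ξ = min{1, λ/‖Ũ‖_F}` of the projection onto the Frobenius ball of radius `λ`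
satisfies `128/129 ≤ ξ ≤ 1`. -/
theorem gradient_step_stays_near_ball {n r : ℕ} (lam : ℝ) (hlam : 0 < lam)
    (f : Matrix (Fin n) (Fin n) ℝ → ℝ)
    (g : Matrix (Fin n) (Fin n) ℝ → Matrix (Fin n) (Fin n) ℝ)
    (hg : IsGradient f g)
    (U : Matrix (Fin n) (Fin r) ℝ) (hU : fnorm U ≤ lam)
    (P : Matrix (Fin n) (Fin n) ℝ) (hP : IsProjMatrix P U)
    (X : Matrix (Fin n) (Fin n) ℝ) (hX : X = U * Uᵀ)
    (η : ℝ) (hη : 0 < η) (hηle : η ≤ 1 / (128 * specNorm (g X * P)))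
    (Utld : Matrix (Fin n) (Fin r) ℝ) (hUtld : Utld = U - η • (g X * U))
    (ξ : ℝ) (hξ : ξ = min 1 (lam / fnorm Utld)) :
    fnorm Utld ≤ 129 / 128 * lam ∧ 128 / 129 ≤ ξ ∧ ξ ≤ 1 :=
  gradient_step_stays_near_ball_general lam g U hU P hP X η hη hηle Utld hUtld ξ hξ
end
end

section
/- Let H be a real Hilbert space, let f : H → ℝ be Fréchet differentiable, L-smooth and μ-strongly convex with 0 < μ ≤ L, let K ⊆ H be a nonempty closed convex set with 0 ∈ K, and let x⋆ ∈ K be a minimizer of f over K. Let x₀ be the metric projection of −(1/L)·∇f(0) onto K. Then ‖x₀ − x⋆‖ ≤ sqrt(1 − μ/L)·‖x⋆‖. -/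
open Matrix

attribute [local instance] Matrix.frobeniusNormedAddCommGroup Matrix.frobeniusNormedSpace

noncomputable section

open scoped RealInnerProductSpace

/-! The minimizer `x⋆` is a fixed point of the projected gradient step
`x ↦ P_K (x - ∇f(x) / L)`, and `x₀` is that step taken from `0`. Projection onto a convex set
is nonexpansive, and for an `L`-smooth, `μ`-strongly convex `f` the gradient step is a
`√(1 - μ / L)`-contraction: expanding the square, the cross term is controlled by strong
monotonicity of `∇f` and the quadratic term by its cocoercivity
`‖∇f x - ∇f y‖² ≤ L ⟪∇f x - ∇f y, x - y⟫`, which follows from the descent lemma. -/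

section

variable {H : Type*} [NormedAddCommGroup H] [InnerProductSpace ℝ H]

theorem inner_sub_le_zero_of_forall_norm_sub_le {K : Set H} (hK : Convex ℝ K) {u p : H}
    (hp : p ∈ K) (hmin : ∀ z ∈ K, ‖u - p‖ ≤ ‖u - z‖) : ∀ z ∈ K, ⟪u - p, z - p⟫ ≤ 0 := by
  have : Nonempty K := ⟨⟨p, hp⟩⟩
  refine (norm_eq_iInf_iff_real_inner_le_zero hK hp).mp (le_antisymm ?_ ?_)
  · exact le_ciInf fun z => hmin z z.2
  · exact ciInf_le ⟨0, Set.forall_mem_range.2 fun z => norm_nonneg _⟩ (⟨p, hp⟩ : K)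

/-- Nonexpansiveness of the metric projection onto a convex set, through its variational
characterization. -/
theorem norm_sub_le_of_inner_sub_le_zero {u v p q : H} (hp : ⟪u - p, q - p⟫ ≤ 0)
    (hq : ⟪v - q, p - q⟫ ≤ 0) : ‖p - q‖ ≤ ‖u - v‖ := by
  have hsq : ‖p - q‖ ^ 2 ≤ ‖u - v‖ * ‖p - q‖ := by
    have : ⟪u - v, p - q⟫ = ‖p - q‖ ^ 2 - ⟪u - p, q - p⟫ - ⟪v - q, p - q⟫ := by
      rw [← real_inner_self_eq_norm_sq, ← neg_sub p q, inner_neg_right]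
      simp only [inner_sub_left, inner_sub_right]
      ring
    linarith [real_inner_le_norm (u - v) (p - q)]
  rcases (norm_nonneg (p - q)).eq_or_lt with h | h
  · rw [← h]; exact norm_nonneg _
  · nlinarith

theorem mul_sq_norm_sub_le_inner {f : H → ℝ} {f' : H → H} {μ : ℝ}
    (hconv : ∀ x y, f x + ⟪f' x, y - x⟫ + μ / 2 * ‖y - x‖ ^ 2 ≤ f y) (x y : H) :
    μ * ‖x - y‖ ^ 2 ≤ ⟪f' x - f' y, x - y⟫ := by
  have hxy := hconv x y
  have hyx := hconv y x
  rw [norm_sub_rev] at hxy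
  have hinner : ⟪f' x - f' y, x - y⟫ = -⟪f' x, y - x⟫ - ⟪f' y, x - y⟫ := by
    rw [inner_sub_left, ← inner_neg_right, neg_sub]
  rw [hinner]
  linarith

end

section

variable {H : Type*} [NormedAddCommGroup H] [InnerProductSpace ℝ H] [CompleteSpace H]
  {f : H → ℝ} {f' : H → H} {L μ : ℝ}

theorem inner_gradient_nonneg_of_isMinOn {K : Set H} (hK : Convex ℝ K) {g a z : H}
    (ha : a ∈ K) (hz : z ∈ K) (hf : HasGradientAt f g a) (hmin : IsMinOn f K a) :
    0 ≤ ⟪g, z - a⟫ := by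
  simpa using hmin.localize.hasFDerivWithinAt_nonneg hf.hasFDerivAt.hasFDerivWithinAt
    (sub_mem_posTangentConeAt_of_segment_subset (hK.segment_subset ha hz))

theorem HasGradientAt.hasDerivAt_comp_add_smul {g x d : H} {t : ℝ}
    (hf : HasGradientAt f g (x + t • d)) :
    HasDerivAt (fun s : ℝ => f (x + s • d)) ⟪g, d⟫ t := by
  have hline : HasDerivAt (fun s : ℝ => x + s • d) d t := by
    simpa using ((hasDerivAt_id t).smul_const d).const_add x
  have := hf.hasFDerivAt.comp_hasDerivAt t hline
  rwa [InnerProductSpace.toDual_apply_apply] at this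

/-- The descent lemma. -/
theorem le_add_inner_add_sq_of_lipschitz_gradient (hf : ∀ z, HasGradientAt f (f' z) z)
    (hlip : ∀ x y, ‖f' x - f' y‖ ≤ L * ‖x - y‖) (x y : H) :
    f y ≤ f x + ⟪f' x, y - x⟫ + L / 2 * ‖y - x‖ ^ 2 := by
  set d := y - x
  -- `ψ` is antitone on `[0, 1]`, and `ψ 0 ≥ ψ 1` is the claim.
  set ψ : ℝ → ℝ := fun t => f (x + t • d) - t * ⟪f' x, d⟫ - L / 2 * t ^ 2 * ‖d‖ ^ 2
  have hψ : ∀ t, HasDerivAt ψ (⟪f' (x + t • d) - f' x, d⟫ - L * t * ‖d‖ ^ 2) t := by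
    intro t
    have hquad := ((hasDerivAt_pow 2 t).const_mul (L / 2)).mul_const (‖d‖ ^ 2)
    refine ((((hf _).hasDerivAt_comp_add_smul).sub
      ((hasDerivAt_id t).mul_const ⟪f' x, d⟫)).sub hquad).congr_deriv ?_
    rw [inner_sub_left]
    push_cast
    ring
  have hψ' : ∀ t ∈ interior (Set.Icc (0 : ℝ) 1),
      ⟪f' (x + t • d) - f' x, d⟫ - L * t * ‖d‖ ^ 2 ≤ 0 := by
    intro t ht
    rw [interior_Icc] at ht
    rw [sub_nonpos]
    calc ⟪f' (x + t • d) - f' x, d⟫ ≤ ‖f' (x + t • d) - f' x‖ * ‖d‖ := real_inner_le_norm _ _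
      _ ≤ L * ‖t • d‖ * ‖d‖ := by
          gcongr
          simpa using hlip (x + t • d) x
      _ = L * t * ‖d‖ ^ 2 := by rw [norm_smul, Real.norm_of_nonneg ht.1.le]; ring
  have hanti : AntitoneOn ψ (Set.Icc 0 1) :=
    antitoneOn_of_hasDerivWithinAt_nonpos (convex_Icc 0 1)
      (fun t _ => (hψ t).continuousAt.continuousWithinAt)
      (fun t _ => (hψ t).hasDerivWithinAt) hψ'
  have := hanti (by simp) (by simp) zero_le_one
  simp only [ψ, zero_smul, add_zero, one_smul, d, add_sub_cancel] at this
  linarith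

theorem add_inner_add_sq_norm_sub_le (hf : ∀ z, HasGradientAt f (f' z) z) (hL : 0 < L)
    (hlip : ∀ x y, ‖f' x - f' y‖ ≤ L * ‖x - y‖)
    (hconvex : ∀ x y, f x + ⟪f' x, y - x⟫ ≤ f y) (a b : H) :
    f a + ⟪f' a, b - a⟫ + 1 / (2 * L) * ‖f' b - f' a‖ ^ 2 ≤ f b := by
  -- Compare convexity at `a` with the descent lemma at `b`, both at the point reached from `b`
  -- by a gradient step of length `1 / L` for `f - ⟪f' a, ·⟫`.
  set δ := f' b - f' a
  set z := b - (1 / L) • δ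
  have hconv := hconvex a z
  have hdesc := le_add_inner_add_sq_of_lipschitz_gradient hf hlip b z
  have hz : z - b = -((1 / L) • δ) := by simp [z]
  have hza : z - a = (b - a) - (1 / L) • δ := by simp only [z]; abel
  rw [hz, norm_neg, norm_smul, Real.norm_of_nonneg (by positivity), inner_neg_right,
    real_inner_smul_right] at hdesc
  rw [hza, inner_sub_right, real_inner_smul_right] at hconv
  have hδ : ⟪f' b, δ⟫ - ⟪f' a, δ⟫ = ‖δ‖ ^ 2 := by
    rw [← inner_sub_left, real_inner_self_eq_norm_sq]
  field_simp at hdesc hconv ⊢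
  nlinarith

theorem inv_mul_sq_norm_sub_le_inner (hf : ∀ z, HasGradientAt f (f' z) z) (hL : 0 < L)
    (hlip : ∀ x y, ‖f' x - f' y‖ ≤ L * ‖x - y‖)
    (hconvex : ∀ x y, f x + ⟪f' x, y - x⟫ ≤ f y) (x y : H) :
    L⁻¹ * ‖f' x - f' y‖ ^ 2 ≤ ⟪f' x - f' y, x - y⟫ := by
  have hxy := add_inner_add_sq_norm_sub_le hf hL hlip hconvex x y
  have hyx := add_inner_add_sq_norm_sub_le hf hL hlip hconvex y x
  rw [norm_sub_rev] at hxy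
  have hinner : ⟪f' x - f' y, x - y⟫ = -⟪f' x, y - x⟫ - ⟪f' y, x - y⟫ := by
    rw [inner_sub_left, ← inner_neg_right, neg_sub]
  rw [hinner]
  field_simp at hxy hyx ⊢
  linarith

theorem norm_sub_inv_smul_sub_le (hf : ∀ z, HasGradientAt f (f' z) z) (hL : 0 < L)
    (hμ : 0 ≤ μ) (hlip : ∀ x y, ‖f' x - f' y‖ ≤ L * ‖x - y‖)
    (hconv : ∀ x y, f x + ⟪f' x, y - x⟫ + μ / 2 * ‖y - x‖ ^ 2 ≤ f y) (x y : H) :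
    ‖(x - L⁻¹ • f' x) - (y - L⁻¹ • f' y)‖ ≤ √(1 - μ / L) * ‖x - y‖ := by
  have hconvex : ∀ x y, f x + ⟪f' x, y - x⟫ ≤ f y := fun x y => by
    nlinarith [hconv x y, sq_nonneg ‖y - x‖]
  have hcoco := inv_mul_sq_norm_sub_le_inner hf hL hlip hconvex x y
  have hmono := mul_sq_norm_sub_le_inner hconv x y
  have hsq : ‖(x - L⁻¹ • f' x) - (y - L⁻¹ • f' y)‖ ^ 2 ≤ (1 - μ / L) * ‖x - y‖ ^ 2 := by
    have hsplit : (x - L⁻¹ • f' x) - (y - L⁻¹ • f' y) = (x - y) - L⁻¹ • (f' x - f' y) := by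
      rw [smul_sub]; abel
    rw [hsplit, norm_sub_sq_real, norm_smul, real_inner_smul_right, real_inner_comm,
      Real.norm_of_nonneg (by positivity)]
    field_simp at hcoco hmono ⊢
    nlinarith
  rw [← Real.sqrt_sq (norm_nonneg (x - y)), ← Real.sqrt_mul' _ (sq_nonneg _)]
  exact Real.le_sqrt_of_sq_le hsq

end

theorem init_dist_bound_general {H : Type*} [NormedAddCommGroup H] [InnerProductSpace ℝ H]
    [CompleteSpace H]
    (f : H → ℝ) (hdiff : Differentiable ℝ f)
    (L μ : ℝ) (hμ : 0 < μ) (hμL : μ ≤ L)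
    (hsmooth : ∀ x y, ‖gradient f x - gradient f y‖ ≤ L * ‖x - y‖)
    (hconv : ∀ x y, f y ≥ f x + ⟪gradient f x, y - x⟫ + μ / 2 * ‖y - x‖ ^ 2)
    (K : Set H) (hKconv : Convex ℝ K)
    (xstar : H) (hxstarK : xstar ∈ K) (hmin : ∀ z ∈ K, f xstar ≤ f z)
    (x0 : H) (hx0K : x0 ∈ K)
    (hx0proj : ∀ z ∈ K,
      ‖-((1 / L) • gradient f 0) - x0‖ ≤ ‖-((1 / L) • gradient f 0) - z‖) :
    ‖x0 - xstar‖ ≤ Real.sqrt (1 - μ / L) * ‖xstar‖ := by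
  have hL : 0 < L := hμ.trans_le hμL
  have hgrad : ∀ z, HasGradientAt f (gradient f z) z := fun z => (hdiff z).hasGradientAt
  have hx0 := inner_sub_le_zero_of_forall_norm_sub_le hKconv hx0K hx0proj xstar hxstarK
  have hxstar : ⟪(xstar - L⁻¹ • gradient f xstar) - xstar, x0 - xstar⟫ ≤ 0 := by
    rw [sub_sub_cancel_left, inner_neg_left, real_inner_smul_left, neg_nonpos]
    exact mul_nonneg (inv_nonneg.2 hL.le)
      (inner_gradient_nonneg_of_isMinOn hKconv hxstarK hx0K (hgrad xstar) hmin)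
  calc ‖x0 - xstar‖ ≤ ‖(0 - L⁻¹ • gradient f 0) - (xstar - L⁻¹ • gradient f xstar)‖ := by
        refine norm_sub_le_of_inner_sub_le_zero ?_ hxstar
        simpa only [one_div, zero_sub] using hx0
    _ ≤ √(1 - μ / L) * ‖0 - xstar‖ := norm_sub_inv_smul_sub_le hgrad hL hμ.le hsmooth hconv 0 xstar
    _ = √(1 - μ / L) * ‖xstar‖ := by rw [zero_sub, norm_neg]

/-- Initialization guarantee in a real Hilbert space: if `f` is
differentiable, `L`-smooth and `μ`-strongly convex with `0 < μ ≤ L`, `K` is a nonempty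
closed convex set with `0 ∈ K`, `x⋆` minimizes `f` over `K`, and `x₀` is the metric
projection of `−(1/L)·∇f(0)` onto `K`, then `‖x₀ − x⋆‖ ≤ √(1 − μ/L)·‖x⋆‖`. -/
theorem init_dist_bound {H : Type*} [NormedAddCommGroup H] [InnerProductSpace ℝ H]
    [CompleteSpace H]
    (f : H → ℝ) (hdiff : Differentiable ℝ f)
    (L μ : ℝ) (hμ : 0 < μ) (hμL : μ ≤ L)
    (hsmooth : ∀ x y, ‖gradient f x - gradient f y‖ ≤ L * ‖x - y‖)
    (hconv : ∀ x y, f y ≥ f x + ⟪gradient f x, y - x⟫ + μ / 2 * ‖y - x‖ ^ 2)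
    (K : Set H) (hKne : K.Nonempty) (hKclosed : IsClosed K) (hKconv : Convex ℝ K)
    (h0K : (0 : H) ∈ K)
    (xstar : H) (hxstarK : xstar ∈ K) (hmin : ∀ z ∈ K, f xstar ≤ f z)
    (x0 : H) (hx0K : x0 ∈ K)
    (hx0proj : ∀ z ∈ K,
      ‖-((1 / L) • gradient f 0) - x0‖ ≤ ‖-((1 / L) • gradient f 0) - z‖) :
    ‖x0 - xstar‖ ≤ Real.sqrt (1 - μ / L) * ‖xstar‖ :=
  init_dist_bound_general f hdiff L μ hμ hμL hsmooth hconv K hKconv xstar hxstarK hmin x0 hx0K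
    hx0proj
end
end

section
/- For any matrices U, V ∈ ℝ^{n×r}, ‖UUᵀ − VVᵀ‖_F² ≥ 2(√2 − 1)·σ_r(U)²·DIST(U, V)². -/
open Matrix

attribute [local instance] Matrix.frobeniusNormedAddCommGroup Matrix.frobeniusNormedSpace

noncomputable section

/-!
Align `V` to `U` by an orthogonal `R` maximising `tr (Uᵀ V R)` (orthogonal Procrustes).
Comparing `R` with `R H` for Householder reflections `H` and for products of two of them shows
that `Q = Uᵀ V R` is symmetric positive semidefinite. With `W = V R`,
`G = (U - W)ᵀ (U - W) = UᵀU + WᵀW - 2Q` and `D = UᵀU - WᵀW` one has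
`‖UUᵀ - WWᵀ‖² = tr G² / 2 + 2 tr (Q G) + tr D² / 2` and `G + 2Q + D = 2 UᵀU ⪰ 2 σ_r(U)² I`.
In an eigenbasis of `G` this splits into one scalar inequality per eigenvalue, and
`tr G = ‖U - W‖² ≥ DIST(U, V)²`.
-/

lemma eq_zero_of_forall_mul_le_sq_mul {a t : ℝ} (h : ∀ u : ℝ, u * a ≤ u ^ 2 * t) : a = 0 := by
  have := h (a / (|t| + 1))
  field_simp at this
  nlinarith [le_abs_self t, sq_nonneg a]

/-- Sharp: at `p = 0`, `d = 2s - g` the right side is `(g - √2 s)² + 2(√2 - 1) s g`. -/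
lemma two_mul_sqrt_two_sub_one_mul_le {g p d s : ℝ} (hg : 0 ≤ g) (hp : 0 ≤ p)
    (h : 2 * s ≤ g + 2 * p + d) :
    2 * (√2 - 1) * s * g ≤ g ^ 2 / 2 + 2 * p * g + d ^ 2 / 2 := by
  have h2 : √2 ^ 2 = 2 := Real.sq_sqrt zero_le_two
  have h1 : 1 ≤ √2 := by nlinarith [Real.sqrt_nonneg 2]
  have h32 : √2 ≤ 3 / 2 := by nlinarith [Real.sqrt_nonneg 2]
  rcases le_or_gt s 0 with hs | hs
  · have : 2 * (√2 - 1) * s * g ≤ 0 :=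
      mul_nonpos_of_nonpos_of_nonneg (mul_nonpos_of_nonneg_of_nonpos (by linarith) hs) hg
    have : 0 ≤ g ^ 2 / 2 + 2 * p * g + d ^ 2 / 2 := by positivity
    linarith
  set e := g + 2 * p + d - 2 * s
  have he : 0 ≤ e := by linarith
  rcases le_total g s with hgs | hgs
  · nlinarith [sq_nonneg (e - 2 * (p - s + g)), mul_nonneg hg he,
      mul_nonneg hg (by nlinarith : 0 ≤ (4 - 2 * √2) * s - g)]
  rcases le_total g (2 * s) with hg2 | hg2
  · nlinarith [mul_nonneg hp (by linarith : 0 ≤ g - s), mul_nonneg he (by linarith : 0 ≤ 2 * s - g),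
      sq_nonneg (g - √2 * s), sq_nonneg (e - 2 * p),
      (by rw [mul_pow, h2] : (√2 * s) ^ 2 = 2 * s ^ 2)]
  · nlinarith [sq_nonneg (e - 2 * p - g + 2 * s), mul_nonneg hp hg,
      mul_nonneg hg (by nlinarith : 0 ≤ (√2 + 1) * g - 4 * s),
      mul_nonneg hp (by linarith : 0 ≤ g - s)]

namespace Matrix

lemma trace_mul_transpose_mul_mul_transpose {m n R : Type*} [Fintype m] [Fintype n] [CommRing R]
    (X Y : Matrix m n R) : trace (X * Xᵀ * (Y * Yᵀ)) = trace (Xᵀ * Y * (Yᵀ * X)) := by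
  rw [Matrix.mul_assoc, trace_mul_comm]
  simp only [Matrix.mul_assoc]

lemma two_mul_trace_mul_self_add_trace_mul_self_sub {n R : Type*} [Fintype n] [CommRing R]
    (A B Q : Matrix n n R) :
    2 * (trace (A * A) + trace (B * B) - 2 * trace (Q * Q)) =
      trace ((A + B - (2 : R) • Q) * (A + B - (2 : R) • Q)) +
        4 * trace (Q * (A + B - (2 : R) • Q)) + trace ((A - B) * (A - B)) := by
  simp only [Matrix.mul_add, Matrix.add_mul, Matrix.mul_sub, Matrix.sub_mul, Matrix.smul_mul,
    Matrix.mul_smul, trace_add, trace_sub, trace_smul, smul_eq_mul]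
  rw [trace_mul_comm A B, trace_mul_comm A Q, trace_mul_comm B Q]
  ring

lemma transpose_sub_mul_sub {m n R : Type*} [Fintype m] [CommRing R] {X Y : Matrix m n R}
    (h : Yᵀ * X = Xᵀ * Y) : (X - Y)ᵀ * (X - Y) = Xᵀ * X + Yᵀ * Y - (2 : R) • (Xᵀ * Y) := by
  rw [transpose_sub, Matrix.sub_mul, Matrix.mul_sub, Matrix.mul_sub, h, two_smul]
  abel

variable {n : Type*} [Fintype n]

lemma posSemidef_transpose_mul_self {m : Type*} [Fintype m] (A : Matrix m n ℝ) :
    (Aᵀ * A).PosSemidef := by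
  simpa [conjTranspose_eq_transpose_of_trivial] using posSemidef_conjTranspose_mul_self A

lemma sum_diag_sq_le_trace_mul_self {D : Matrix n n ℝ} (hD : D.IsHermitian) :
    ∑ i, D i i ^ 2 ≤ trace (D * D) := by
  have hsq : trace (D * D) = ∑ i, ∑ j, D i j ^ 2 := by
    simp only [trace, diag, mul_apply, sq]
    refine Finset.sum_congr rfl fun i _ => Finset.sum_congr rfl fun j _ => ?_
    rw [← hD.apply j i, star_trivial]
  rw [hsq]
  exact Finset.sum_le_sum fun i _ =>
    Finset.single_le_sum (f := fun j => D i j ^ 2) (fun _ _ => sq_nonneg _) (Finset.mem_univ i)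

variable [DecidableEq n]

/-- For `v = 0` the junk value `2 / 0 = 0` makes this `1`. -/
def householder (v : n → ℝ) : Matrix n n ℝ := 1 - (2 / (v ⬝ᵥ v)) • vecMulVec v v

lemma transpose_householder (v : n → ℝ) : (householder v)ᵀ = householder v := by
  simp [householder, transpose_vecMulVec]

lemma householder_mul_self (v : n → ℝ) : householder v * householder v = 1 := by
  by_cases hv : v ⬝ᵥ v = 0
  · simp [householder, hv]
  · have hsq : vecMulVec v v * vecMulVec v v = (v ⬝ᵥ v) • vecMulVec v v := by
      rw [vecMulVec_mul_vecMulVec, vecMulVec_smul]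
    simp only [householder, sub_mul, mul_sub, one_mul, mul_one, Matrix.smul_mul, Matrix.mul_smul,
      hsq, smul_smul]
    match_scalars <;> field_simp; ring

lemma householder_mem_orthogonalGroup (v : n → ℝ) : householder v ∈ orthogonalGroup n ℝ := by
  rw [mem_orthogonalGroup_iff, transpose_householder, householder_mul_self]

lemma householder_mulVec (v w : n → ℝ) :
    householder v *ᵥ w = w - (2 / (v ⬝ᵥ v) * (v ⬝ᵥ w)) • v := by
  simp [householder, sub_mulVec, vecMulVec_mulVec, smul_smul, smul_mulVec]

lemma trace_mul_householder (Q : Matrix n n ℝ) (v : n → ℝ) :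
    trace (Q * householder v) = trace Q - 2 / (v ⬝ᵥ v) * (v ⬝ᵥ Q *ᵥ v) := by
  simp [householder, mul_sub, trace_sub, mul_vecMulVec, trace_vecMulVec, dotProduct_comm]

lemma isCompact_orthogonalGroup : IsCompact (orthogonalGroup n ℝ : Set (Matrix n n ℝ)) := by
  have hclosed : IsClosed (orthogonalGroup n ℝ : Set (Matrix n n ℝ)) := by
    have : (orthogonalGroup n ℝ : Set (Matrix n n ℝ)) = {R | Rᵀ * R = 1} :=
      Set.ext fun _ => mem_orthogonalGroup_iff' _ _
    rw [this]
    exact isClosed_eq (by fun_prop) continuous_const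
  refine (isCompact_univ_pi fun _ => isCompact_univ_pi fun _ =>
    isCompact_closedBall (0 : ℝ) 1).of_isClosed_subset hclosed fun R hR i _ j _ => ?_
  simpa using entry_norm_bound_of_unitary hR i j

lemma exists_forall_trace_mul_le (M : Matrix n n ℝ) :
    ∃ R ∈ orthogonalGroup n ℝ, ∀ S ∈ orthogonalGroup n ℝ, trace (M * S) ≤ trace (M * R) :=
  isCompact_orthogonalGroup.exists_isMaxOn ⟨1, one_mem _⟩
    (by fun_prop : Continuous fun S => trace (M * S)).continuousOn

section TraceMaximal

variable {Q : Matrix n n ℝ}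

lemma dotProduct_mulVec_nonneg_of_forall_trace_mul_le
    (hQ : ∀ T ∈ orthogonalGroup n ℝ, trace (Q * T) ≤ trace Q) (v : n → ℝ) : 0 ≤ v ⬝ᵥ Q *ᵥ v := by
  have h := hQ _ (householder_mem_orthogonalGroup v)
  rw [trace_mul_householder] at h
  rcases eq_or_ne v 0 with rfl | hv
  · simp
  · have hvv : 0 < v ⬝ᵥ v := by simpa using dotProduct_star_self_pos_iff.mpr hv
    exact nonneg_of_mul_nonneg_right (a := 2 / (v ⬝ᵥ v)) (by linarith) (by positivity)

/-- `householder eⱼ * householder (eⱼ + u eᵢ)` is a rotation in the `(i, j)`-plane; optimality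
against it for every `u` reads `u (Q i j - Q j i) ≤ u² (Q i i + Q j j)`. -/
lemma transpose_eq_of_forall_trace_mul_le
    (hQ : ∀ T ∈ orthogonalGroup n ℝ, trace (Q * T) ≤ trace Q) : Qᵀ = Q := by
  ext i j
  rcases eq_or_ne i j with rfl | hij
  · rfl
  refine (sub_eq_zero.mp (eq_zero_of_forall_mul_le_sq_mul (t := Q i i + Q j j) fun u => ?_)).symm
  set v : n → ℝ := Pi.single j 1
  set w : n → ℝ := Pi.single j 1 + u • Pi.single i 1
  have h := hQ _ (mul_mem (householder_mem_orthogonalGroup v) (householder_mem_orthogonalGroup w))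
  rw [← Matrix.mul_assoc, trace_mul_householder, trace_mul_householder, ← mulVec_mulVec,
    householder_mulVec] at h
  simp only [v, w, dotProduct_single, Pi.single_eq_same, mul_one, div_one, mulVec_single,
    MulOpposite.op_one, one_smul, single_dotProduct, col_apply, one_mul, dotProduct_add,
    Pi.add_apply, Pi.smul_apply, Pi.single_eq_of_ne hij, Pi.single_eq_of_ne hij.symm, smul_eq_mul,
    mul_zero, add_zero, dotProduct_smul, zero_add, mulVec_sub, mulVec_add, mulVec_smul,
    dotProduct_sub, add_dotProduct, smul_dotProduct, tsub_le_iff_right] at h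
  field_simp at h
  rw [transpose_apply]
  linarith

lemma posSemidef_of_forall_trace_mul_le
    (hQ : ∀ T ∈ orthogonalGroup n ℝ, trace (Q * T) ≤ trace Q) : Q.PosSemidef :=
  .of_dotProduct_mulVec_nonneg
    (by rw [IsHermitian, conjTranspose_eq_transpose_of_trivial,
      transpose_eq_of_forall_trace_mul_le hQ])
    fun v => by simpa using dotProduct_mulVec_nonneg_of_forall_trace_mul_le hQ v

end TraceMaximal

lemma exists_mem_orthogonalGroup_posSemidef_mul (M : Matrix n n ℝ) :
    ∃ R ∈ orthogonalGroup n ℝ, (M * R).PosSemidef := by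
  obtain ⟨R, hR, hmax⟩ := exists_forall_trace_mul_le M
  refine ⟨R, hR, posSemidef_of_forall_trace_mul_le fun T hT => ?_⟩
  simpa only [Matrix.mul_assoc] using hmax _ (mul_mem hR hT)

lemma two_mul_sqrt_two_sub_one_mul_trace_diagonal_le {g : n → ℝ} {Q D : Matrix n n ℝ} {s : ℝ}
    (hg : ∀ i, 0 ≤ g i) (hQ : Q.PosSemidef) (hD : D.IsHermitian)
    (h : (diagonal g + (2 : ℝ) • Q + D - (2 * s) • 1).PosSemidef) :
    2 * (√2 - 1) * s * trace (diagonal g) ≤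
      trace (diagonal g * diagonal g) / 2 + 2 * trace (Q * diagonal g) + trace (D * D) / 2 := by
  have hi : ∀ i, 2 * s ≤ g i + 2 * Q i i + D i i := fun i => by
    simpa [sub_nonneg] using h.diag_nonneg (i := i)
  have := Finset.sum_le_sum (s := Finset.univ) fun i _ =>
    two_mul_sqrt_two_sub_one_mul_le (hg i) hQ.diag_nonneg (hi i)
  have hQg : trace (Q * diagonal g) = ∑ i, Q i i * g i := by simp [trace, mul_diagonal]
  have hD2 := sum_diag_sq_le_trace_mul_self hD
  rw [diagonal_mul_diagonal, trace_diagonal, trace_diagonal, hQg]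
  simp only [Finset.sum_add_distrib, ← Finset.sum_div, Finset.mul_sum, mul_assoc, sq] at this hD2 ⊢
  linarith

lemma trace_conjStarAlgAut (u : unitaryGroup n ℝ) (X : Matrix n n ℝ) :
    trace (Unitary.conjStarAlgAut ℝ _ u X) = trace X := by
  rw [Unitary.conjStarAlgAut_apply, trace_mul_cycle, Unitary.coe_star_mul_self, one_mul]

lemma two_mul_sqrt_two_sub_one_mul_trace_le {G Q D : Matrix n n ℝ} {s : ℝ} (hG : G.PosSemidef)
    (hQ : Q.PosSemidef) (hD : D.IsHermitian)
    (h : (G + (2 : ℝ) • Q + D - (2 * s) • 1).PosSemidef) :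
    2 * (√2 - 1) * s * trace G ≤ trace (G * G) / 2 + 2 * trace (Q * G) + trace (D * D) / 2 := by
  set O := hG.isHermitian.eigenvectorUnitary
  set φ := Unitary.conjStarAlgAut ℝ (Matrix n n ℝ) (star O)
  have hφ : ∀ X, φ X = (O : Matrix n n ℝ)ᴴ * X * O := fun X => by
    simp [φ, star_eq_conjTranspose]
  have hφG : φ G = diagonal hG.isHermitian.eigenvalues := by
    rw [hG.isHermitian.conjStarAlgAut_star_eigenvectorUnitary, RCLike.ofReal_real_eq_id,
      Function.id_comp]
  have hφ_trace : ∀ X, trace (φ X) = trace X := trace_conjStarAlgAut _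
  have hφ_psd : ∀ {X}, X.PosSemidef → (φ X).PosSemidef := fun hX =>
    hφ _ ▸ hX.conjTranspose_mul_mul_same _
  have key := two_mul_sqrt_two_sub_one_mul_trace_diagonal_le (Q := φ Q) (D := φ D) (s := s)
    hG.eigenvalues_nonneg (hφ_psd hQ) (hφ D ▸ isHermitian_conjTranspose_mul_mul _ hD)
    (by simpa only [map_add, map_sub, map_smul, map_one, hφG] using hφ_psd h)
  simpa only [← hφG, ← map_mul, hφ_trace] using key

end Matrix

lemma norm_toLp_two_sq {ι : Type*} [Fintype ι] (x : ι → ℝ) : ‖WithLp.toLp 2 x‖ ^ 2 = x ⬝ᵥ x := by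
  rw [← real_inner_self_eq_norm_sq, EuclideanSpace.inner_toLp_toLp, star_trivial]

lemma singVal_nonneg {m n : ℕ} (A : Matrix (Fin n) (Fin m) ℝ) (k : ℕ) : 0 ≤ singVal A k :=
  Real.iSup_nonneg fun _ => Real.iInf_nonneg fun _ => norm_nonneg _

/-- For `k = m` the only admissible subspace is the whole space. -/
lemma singVal_le_norm {m n : ℕ} (A : Matrix (Fin n) (Fin m) ℝ) {x : EuclideanSpace ℝ (Fin m)}
    (hx : ‖x‖ = 1) : singVal A m ≤ ‖toEuclideanLin A x‖ := by
  have : Nonempty {V : Submodule ℝ (EuclideanSpace ℝ (Fin m)) // Module.finrank ℝ V = m} :=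
    ⟨⟨⊤, by simp⟩⟩
  refine ciSup_le fun V => ?_
  have hV : V.1 = ⊤ := Submodule.eq_top_of_finrank_eq (by rw [V.2, finrank_euclideanSpace_fin])
  have hxV : x ∈ V.1 := by rw [hV]; trivial
  exact ciInf_le ⟨0, by rintro _ ⟨_, rfl⟩; exact norm_nonneg _⟩
    (⟨x, hxV, hx⟩ : {x : EuclideanSpace ℝ (Fin m) // x ∈ V.1 ∧ ‖x‖ = 1})

lemma singVal_mul_norm_le {m n : ℕ} (A : Matrix (Fin n) (Fin m) ℝ)
    (x : EuclideanSpace ℝ (Fin m)) : singVal A m * ‖x‖ ≤ ‖toEuclideanLin A x‖ := by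
  rcases eq_or_ne x 0 with rfl | hx
  · simp
  have h := singVal_le_norm A (x := ‖x‖⁻¹ • x) (by simp [norm_smul, hx])
  rw [map_smul, norm_smul, norm_inv, norm_norm] at h
  rwa [le_inv_mul_iff₀ (norm_pos_iff.mpr hx), mul_comm] at h

lemma posSemidef_transpose_mul_self_sub_singVal_sq {m n : ℕ} (A : Matrix (Fin n) (Fin m) ℝ) :
    (Aᵀ * A - singVal A m ^ 2 • 1).PosSemidef := by
  refine .of_dotProduct_mulVec_nonneg ?_ fun x => ?_
  · exact (posSemidef_transpose_mul_self A).isHermitian.sub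
      (isHermitian_one.smul (IsSelfAdjoint.all _))
  · have h := pow_le_pow_left₀ (by positivity [singVal_nonneg A m])
      (singVal_mul_norm_le A (WithLp.toLp 2 x)) 2
    rw [toLpLin_apply, mul_pow, norm_toLp_two_sq, norm_toLp_two_sq] at h
    rw [star_trivial, sub_mulVec, ← mulVec_mulVec, dotProduct_sub, dotProduct_mulVec,
      vecMul_transpose]
    simpa [smul_mulVec, dotProduct_smul] using h

lemma fnorm_sq_eq_trace {m n : ℕ} (A : Matrix (Fin m) (Fin n) ℝ) : fnorm A ^ 2 = trace (Aᵀ * A) :=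
  Real.sq_sqrt (posSemidef_transpose_mul_self A).trace_nonneg

lemma fnorm_sq_mul_transpose_sub_mul_transpose {n r : ℕ} (X Y : Matrix (Fin n) (Fin r) ℝ) :
    fnorm (X * Xᵀ - Y * Yᵀ) ^ 2 = trace (Xᵀ * X * (Xᵀ * X)) + trace (Yᵀ * Y * (Yᵀ * Y)) -
      2 * trace (Xᵀ * Y * (Yᵀ * X)) := by
  rw [fnorm_sq_eq_trace]
  simp only [transpose_sub, transpose_mul, transpose_transpose, Matrix.mul_sub, Matrix.sub_mul,
    trace_sub, trace_mul_transpose_mul_mul_transpose]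
  rw [trace_mul_comm (Yᵀ * X)]
  ring

lemma fnorm_sq_mul_transpose_sub_mul_transpose_of_symm {n r : ℕ} {X Y : Matrix (Fin n) (Fin r) ℝ}
    (h : Yᵀ * X = Xᵀ * Y) :
    fnorm (X * Xᵀ - Y * Yᵀ) ^ 2 =
      trace ((X - Y)ᵀ * (X - Y) * ((X - Y)ᵀ * (X - Y))) / 2 +
        2 * trace (Xᵀ * Y * ((X - Y)ᵀ * (X - Y))) +
        trace ((Xᵀ * X - Yᵀ * Y) * (Xᵀ * X - Yᵀ * Y)) / 2 := by
  have := two_mul_trace_mul_self_add_trace_mul_self_sub (Xᵀ * X) (Yᵀ * Y) (Xᵀ * Y)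
  rw [← transpose_sub_mul_sub h] at this
  rw [fnorm_sq_mul_transpose_sub_mul_transpose, h]
  linarith

lemma DIST_nonneg {n r : ℕ} (U V : Matrix (Fin n) (Fin r) ℝ) : 0 ≤ DIST U V :=
  Real.iInf_nonneg fun _ => Real.sqrt_nonneg _

lemma DIST_le_fnorm {n r : ℕ} (U V : Matrix (Fin n) (Fin r) ℝ) {R : Matrix (Fin r) (Fin r) ℝ}
    (hR : R ∈ orthogonalGroup (Fin r) ℝ) : DIST U V ≤ fnorm (U - V * R) :=
  ciInf_le ⟨0, by rintro _ ⟨_, rfl⟩; exact Real.sqrt_nonneg _⟩ (⟨R, hR⟩ : orthogonalGroup (Fin r) ℝ)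

/-- For any `U, V ∈ ℝ^{n×r}`,
`‖UUᵀ − VVᵀ‖_F² ≥ 2(√2 − 1)·σ_r(U)²·DIST(U,V)²`. -/
theorem fnorm_sq_outer_diff_ge {n r : ℕ} (U V : Matrix (Fin n) (Fin r) ℝ) :
    fnorm (U * Uᵀ - V * Vᵀ) ^ 2 ≥
      2 * (Real.sqrt 2 - 1) * singVal U r ^ 2 * DIST U V ^ 2 := by
  obtain ⟨R, hR, hQ⟩ := exists_mem_orthogonalGroup_posSemidef_mul (Uᵀ * V)
  rw [Matrix.mul_assoc] at hQ
  set W := V * R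
  have hWU : Wᵀ * U = Uᵀ * W := by
    simpa [IsHermitian, conjTranspose_eq_transpose_of_trivial] using hQ.isHermitian
  have hWW : W * Wᵀ = V * Vᵀ := by
    rw [transpose_mul, Matrix.mul_assoc, ← Matrix.mul_assoc R, (mem_orthogonalGroup_iff _ _).mp hR,
      Matrix.one_mul]
  have hDIST : DIST U V ^ 2 ≤ trace ((U - W)ᵀ * (U - W)) := by
    rw [← fnorm_sq_eq_trace]
    exact pow_le_pow_left₀ (DIST_nonneg U V) (DIST_le_fnorm U V hR) 2
  have key := two_mul_sqrt_two_sub_one_mul_trace_le (s := singVal U r ^ 2)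
    (posSemidef_transpose_mul_self (U - W)) hQ
    ((posSemidef_transpose_mul_self U).isHermitian.sub (posSemidef_transpose_mul_self W).isHermitian)
    (by
      convert (posSemidef_transpose_mul_self_sub_singVal_sq U).smul (zero_le_two (α := ℝ)) using 1
      rw [transpose_sub_mul_sub hWU]
      module)
  have hc : 0 ≤ 2 * (√2 - 1) * singVal U r ^ 2 :=
    mul_nonneg (by linarith [Real.one_lt_sqrt_two]) (sq_nonneg _)
  rw [← hWW, fnorm_sq_mul_transpose_sub_mul_transpose_of_symm hWU, ge_iff_le]
  calc 2 * (√2 - 1) * singVal U r ^ 2 * DIST U V ^ 2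
      ≤ 2 * (√2 - 1) * singVal U r ^ 2 * trace ((U - W)ᵀ * (U - W)) := by gcongr
    _ ≤ _ := key
end
end
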